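/- Define for D ≥ 2 and S > 0 the function γ(S) = 1 + (D/(4S)) · log(1 − (D²/((D−1)(D+2))) · ((1 − √(1 − g^D))/(1 + √(1 − g^D))) · (1 − g)), where g = exp(−2S/D). Then γ(S) < 1 for all S > 0, and γ is strictly increasing in S. -/

import Mathlib

/-!
Since `exp (-2S/D) ^ D = exp (-2S)`, one has `gam D S = 1 + (D/4) · log (1 - A S) / S` with
`A S = c · ρ S · (1 - e^{-2S/D})`, where `c = D²/((D-1)(D+2)) ∈ (0, 1]` and
`ρ = (1 - u)/(1 + u) ∈ (0, 1]` for `u = √(1 - e^{-2S})`. Hence `0 < A < 1`, which gives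
`gam < 1`.

For monotonicity it suffices that `S A' ≤ A (1 - A)`: the derivative of `log (1 - A S) / S` then
has the sign of `-S A'/(1 - A) - log (1 - A) ≥ -A - log (1 - A) > 0`. Since `ρ' = -(2/u) ρ`,
`S A' = -(2S/u) A + c ρ (2S/D) e^{-2S/D}`; the second term is at most `A` because
`x e^{-x} ≤ 1 - e^{-x}`, and the first is at most `-A²` because
`A ≤ 1 - e^{-2S/D} ≤ 2S/D ≤ 2S/u`.
-/

/-- The convergence-rate function
`γ(S) = 1 + (D/(4S)) · log(1 − (D²/((D−1)(D+2))) · ((1−√(1−g^D))/(1+√(1−g^D))) · (1−g))`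
with `g = exp(−2S/D)`. -/
noncomputable def gam (D : ℕ) (S : ℝ) : ℝ :=
  1 + ((D : ℝ) / (4 * S)) * Real.log (1 -
    ((D : ℝ) ^ 2 / (((D : ℝ) - 1) * ((D : ℝ) + 2))) *
      ((1 - Real.sqrt (1 - Real.exp (-2 * S / D) ^ D)) /
        (1 + Real.sqrt (1 - Real.exp (-2 * S / D) ^ D))) *
      (1 - Real.exp (-2 * S / D)))

open Real Set

lemma sq_div_sub_one_mul_add_two_pos_le_one {d : ℝ} (hd : 2 ≤ d) :
    0 < d ^ 2 / ((d - 1) * (d + 2)) ∧ d ^ 2 / ((d - 1) * (d + 2)) ≤ 1 := by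
  have hden : 0 < (d - 1) * (d + 2) := by nlinarith
  exact ⟨by positivity, (div_le_one hden).mpr (by nlinarith)⟩

lemma mul_exp_neg_le_one_sub_exp_neg (x : ℝ) : x * exp (-x) ≤ 1 - exp (-x) := by
  have h := mul_le_mul_of_nonneg_right (add_one_le_exp x) (exp_pos (-x)).le
  rw [add_mul, ← exp_add, add_neg_cancel, exp_zero, one_mul] at h
  linarith

theorem strictMonoOn_log_one_sub_div {A : ℝ → ℝ} (hA : ∀ x > 0, 0 < A x ∧ A x < 1)
    (hA' : ∀ x > 0, ∃ a, HasDerivAt A a x ∧ x * a ≤ A x * (1 - A x)) :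
    StrictMonoOn (fun x => log (1 - A x) / x) (Ioi 0) := by
  choose! A' hderiv hle using hA'
  have hf : ∀ x > 0, HasDerivAt (fun x => log (1 - A x) / x)
      ((-(x * A' x) / (1 - A x) - log (1 - A x)) / x ^ 2) x := by
    intro x hx
    have h := (((hderiv x hx).const_sub 1).log (by linarith [hA x hx])).fun_div
      (hasDerivAt_id' x) hx.ne'
    exact h.congr_deriv (by ring)
  refine strictMonoOn_of_hasDerivWithinAt_pos (convex_Ioi 0)
    (fun x hx => (hf x hx).continuousAt.continuousWithinAt)
    (by simpa using fun x hx => (hf x hx).hasDerivWithinAt) ?_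
  rw [interior_Ioi]
  intro x hx
  obtain ⟨hA0, hA1⟩ := hA x hx
  have hlog : log (1 - A x) < -A x := by
    linarith [log_lt_sub_one_of_pos (by linarith : 0 < 1 - A x) (by linarith : 1 - A x ≠ 1)]
  have hquot : x * A' x / (1 - A x) ≤ A x := by
    rw [div_le_iff₀ (by linarith)]; exact hle x hx
  exact div_pos (by rw [neg_div]; linarith) (pow_pos hx 2)

section

variable {S : ℝ}

lemma sqrt_one_sub_exp_pos_lt_one (hS : 0 < S) :
    0 < √(1 - exp (-2 * S)) ∧ √(1 - exp (-2 * S)) < 1 := by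
  have h1 : exp (-2 * S) < 1 := exp_lt_one_iff.mpr (by linarith)
  have h0 := exp_pos (-2 * S)
  exact ⟨sqrt_pos.mpr (by linarith), (sqrt_lt' one_pos).mpr (by linarith)⟩

lemma hasDerivAt_sqrt_one_sub_exp (hS : 0 < S) :
    HasDerivAt (fun S => √(1 - exp (-2 * S))) (exp (-2 * S) / √(1 - exp (-2 * S))) S := by
  have hexp := ((hasDerivAt_id' S).const_mul (-2)).exp.const_sub 1
  have h := hexp.sqrt (sqrt_pos.mp (sqrt_one_sub_exp_pos_lt_one hS).1).ne'
  convert h using 1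
  field_simp

noncomputable def gamRatio (S : ℝ) : ℝ :=
  (1 - √(1 - exp (-2 * S))) / (1 + √(1 - exp (-2 * S)))

lemma gamRatio_pos_le_one (hS : 0 < S) : 0 < gamRatio S ∧ gamRatio S ≤ 1 := by
  obtain ⟨hu0, hu1⟩ := sqrt_one_sub_exp_pos_lt_one hS
  exact ⟨div_pos (by linarith) (by linarith), (div_le_one (by linarith)).mpr (by linarith)⟩

lemma hasDerivAt_gamRatio (hS : 0 < S) :
    HasDerivAt gamRatio (-(2 / √(1 - exp (-2 * S))) * gamRatio S) S := by
  have hu0 := (sqrt_one_sub_exp_pos_lt_one hS).1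
  have hu := hasDerivAt_sqrt_one_sub_exp hS
  have h := (hu.const_sub 1).fun_div (hu.const_add 1) (by positivity)
  have hsq : √(1 - exp (-2 * S)) ^ 2 = 1 - exp (-2 * S) := sq_sqrt (sqrt_pos.mp hu0).le
  refine h.congr_deriv ?_
  unfold gamRatio
  generalize √(1 - exp (-2 * S)) = u at hu0 hsq ⊢
  generalize exp (-2 * S) = e at hsq ⊢
  field_simp
  linear_combination -2 * hsq

end

noncomputable def gamDeficit (D : ℕ) (S : ℝ) : ℝ :=
  (D : ℝ) ^ 2 / (((D : ℝ) - 1) * ((D : ℝ) + 2)) * gamRatio S * (1 - exp (-2 * S / D))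

section

variable {D : ℕ} {S : ℝ}

lemma gam_eq (hD : D ≠ 0) : gam D S = 1 + D / 4 * (log (1 - gamDeficit D S) / S) := by
  have hpow : exp (-2 * S / D) ^ D = exp (-2 * S) := by
    rw [← exp_nat_mul]; congr 1; field_simp
  rw [gam, gamDeficit, gamRatio, hpow]
  ring

lemma gamDeficit_pos_le (hD : 2 ≤ D) (hS : 0 < S) :
    0 < gamDeficit D S ∧ gamDeficit D S ≤ 1 - exp (-2 * S / D) := by
  obtain ⟨hc0, hc1⟩ := sq_div_sub_one_mul_add_two_pos_le_one (d := D) (by exact_mod_cast hD)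
  obtain ⟨hr0, hr1⟩ := gamRatio_pos_le_one hS
  have hg : 0 < 1 - exp (-2 * S / D) := by
    rw [sub_pos, exp_lt_one_iff]
    exact div_neg_of_neg_of_pos (by linarith) (Nat.cast_pos.mpr (by omega))
  refine ⟨by unfold gamDeficit; positivity, ?_⟩
  calc gamDeficit D S ≤ 1 * 1 * (1 - exp (-2 * S / D)) := by unfold gamDeficit; gcongr
    _ = 1 - exp (-2 * S / D) := by ring

lemma gamDeficit_pos_lt_one (hD : 2 ≤ D) (hS : 0 < S) :
    0 < gamDeficit D S ∧ gamDeficit D S < 1 := by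
  obtain ⟨h0, h1⟩ := gamDeficit_pos_le hD hS
  exact ⟨h0, h1.trans_lt (sub_lt_self 1 (exp_pos _))⟩

lemma hasDerivAt_gamDeficit (hS : 0 < S) :
    HasDerivAt (gamDeficit D)
      ((D : ℝ) ^ 2 / (((D : ℝ) - 1) * ((D : ℝ) + 2)) *
        (-(2 / √(1 - exp (-2 * S))) * gamRatio S * (1 - exp (-2 * S / D)) +
          gamRatio S * (2 / D * exp (-2 * S / D)))) S := by
  have hg := ((hasDerivAt_id' S).const_mul (-2)).div_const (D : ℝ) |>.exp.const_sub 1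
  refine (((hasDerivAt_gamRatio hS).const_mul _).fun_mul hg).congr_deriv ?_
  ring

lemma exists_hasDerivAt_gamDeficit_mul_le (hD : 2 ≤ D) (hS : 0 < S) :
    ∃ a, HasDerivAt (gamDeficit D) a S ∧ S * a ≤ gamDeficit D S * (1 - gamDeficit D S) := by
  refine ⟨_, hasDerivAt_gamDeficit hS, ?_⟩
  obtain ⟨hc0, -⟩ := sq_div_sub_one_mul_add_two_pos_le_one (d := D) (by exact_mod_cast hD)
  obtain ⟨hr0, -⟩ := gamRatio_pos_le_one hS
  obtain ⟨hu0, hu1⟩ := sqrt_one_sub_exp_pos_lt_one hS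
  obtain ⟨hA0, hA1⟩ := gamDeficit_pos_le hD hS
  have hD1 : (1 : ℝ) ≤ D := by exact_mod_cast (by omega : 1 ≤ D)
  have hexp : exp (-2 * S / D) = exp (-(2 * S / D)) := by congr 1; ring
  set c := (D : ℝ) ^ 2 / (((D : ℝ) - 1) * ((D : ℝ) + 2))
  set u := √(1 - exp (-2 * S))
  set g := exp (-2 * S / D)
  set A := gamDeficit D S
  have hLg : 2 * S / D * g ≤ 1 - g := by
    rw [hexp]; exact mul_exp_neg_le_one_sub_exp_neg _
  have hAu : A ≤ 2 * S / u := calc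
    A ≤ 1 - g := hA1
    _ ≤ 2 * S / D := by rw [hexp]; linarith [add_one_le_exp (-(2 * S / D))]
    _ ≤ 2 * S := div_le_self (by positivity) hD1
    _ ≤ 2 * S / u := le_div_self (by positivity) hu0 hu1.le
  have hsplit : S * (c * (-(2 / u) * gamRatio S * (1 - g) + gamRatio S * (2 / D * g))) =
      -(2 * S / u) * A + c * gamRatio S * (2 * S / D * g) := by
    simp only [A, gamDeficit]; ring
  have h1 : c * gamRatio S * (2 * S / D * g) ≤ A :=
    mul_le_mul_of_nonneg_left hLg (by positivity)
  have h2 : A * A ≤ 2 * S / u * A := mul_le_mul_of_nonneg_right hAu hA0.le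
  rw [hsplit]
  linarith

end

/-- For `D ≥ 2`, the convergence rate satisfies `γ(S) < 1` for all `S > 0`, and `γ` is
strictly increasing on `(0, ∞)`. -/
theorem gam_lt_one_and_strictMono (D : ℕ) (hD : 2 ≤ D) :
    (∀ S > 0, gam D S < 1) ∧ StrictMonoOn (gam D) (Set.Ioi 0) := by
  have hD0 : D ≠ 0 := by omega
  have hD4 : (0 : ℝ) < D / 4 := by positivity
  refine ⟨fun S hS => ?_, fun x hx y hy hxy => ?_⟩
  · obtain ⟨hA0, hA1⟩ := gamDeficit_pos_lt_one hD hS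
    have hlog : log (1 - gamDeficit D S) / S < 0 :=
      div_neg_of_neg_of_pos (log_neg (by linarith) (by linarith)) hS
    rw [gam_eq hD0]
    linarith [mul_neg_of_pos_of_neg hD4 hlog]
  · have hmono := strictMonoOn_log_one_sub_div (fun _ => gamDeficit_pos_lt_one hD)
      (fun _ => exists_hasDerivAt_gamDeficit_mul_le hD)
    rw [gam_eq hD0, gam_eq hD0]
    exact add_lt_add_right (mul_lt_mul_of_pos_left (hmono hx hy hxy) hD4) 1
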